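/- Let σ, σ' : ZMod n → Bool satisfy maj_r(σ) = σ', and let [i,j] be a maximal homogeneous block of σ' with value β and with length |[i,j]| ≤ 2r+1. Then |[i,j]| = #_β(σ[i−r, j+r]) − #_{β̄}(σ[j−r, i+r]), where #_γ(σ[a,b]) counts cells ℓ in the cyclic interval [a,b] with σ(ℓ) = γ. -/
import Mathlib


open Finset

/-- Number of `true` cells in the radius-`r` neighborhood `[i-r, i+r]` of cell `i`. -/
def majCount (n r : ℕ) (σ : ZMod n → Bool) (i : ZMod n) : ℕ :=
  ((Finset.range (2 * r + 1)).filter (fun (t : ℕ) => σ (i - (r : ZMod n) + (t : ZMod n)) = true)).card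

/-- The majority rule with radius `r`. -/
def maj (n r : ℕ) (σ : ZMod n → Bool) : ZMod n → Bool :=
  fun i => decide (r + 1 ≤ majCount n r σ i)

/-- Number of cells with state `β` in the cyclic interval starting at `a` of length `L`. -/
def cnt (n : ℕ) (σ : ZMod n → Bool) (a : ZMod n) (L : ℕ) (β : Bool) : ℕ :=
  ((Finset.range L).filter (fun (t : ℕ) => σ (a + (t : ZMod n)) = β)).card

/-- `[a, a+L-1]` is a maximal homogeneous block of `σ`. -/
def IsBlock (n : ℕ) (σ : ZMod n → Bool) (a : ZMod n) (L : ℕ) : Prop :=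
  0 < L ∧ L ≤ n ∧ (∀ t : ℕ, t < L → σ (a + (t : ZMod n)) = σ a) ∧
    σ (a - 1) ≠ σ a ∧ σ (a + (L : ZMod n)) ≠ σ a

/-- Cell `c` lies in the cyclic interval starting at `a` of length `L`. -/
def InBlock (n : ℕ) (c a : ZMod n) (L : ℕ) : Prop :=
  ∃ t : ℕ, t < L ∧ c = a + (t : ZMod n)

lemma cnt_succ_end (n : ℕ) (σ : ZMod n → Bool) (a : ZMod n) (L : ℕ) (β : Bool) :
    cnt n σ a (L + 1) β = cnt n σ a L β + (if σ (a + (L : ZMod n)) = β then 1 else 0) := by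
  unfold cnt
  rw [Finset.range_add_one, Finset.filter_insert]
  by_cases hσ : σ (a + (L : ZMod n)) = β
  · rw [if_pos hσ, if_pos hσ, Finset.card_insert_of_notMem (fun hmem => by simp at hmem)]
  · rw [if_neg hσ, if_neg hσ, add_zero]

lemma cnt_succ_front (n : ℕ) (σ : ZMod n → Bool) (a : ZMod n) (L : ℕ) (β : Bool) :
    cnt n σ a (L + 1) β = (if σ a = β then 1 else 0) + cnt n σ (a + 1) L β := by
  induction L generalizing a with
  | zero =>
      by_cases hσ : σ a = β <;>
        simp [cnt, Finset.range_one, Finset.filter_singleton, hσ]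
  | succ L ih =>
      have e1 := cnt_succ_end n σ a (L + 1) β
      have e2 := cnt_succ_end n σ (a + 1) L β
      have e3 : a + ((L + 1 : ℕ) : ZMod n) = a + 1 + ((L : ℕ) : ZMod n) := by
        push_cast; ring
      rw [e1, ih a, e2, e3]; ring

lemma cnt_add (n : ℕ) (σ : ZMod n → Bool) (a : ZMod n) (L1 L2 : ℕ) (β : Bool) :
    cnt n σ a (L1 + L2) β = cnt n σ a L1 β + cnt n σ (a + (L1 : ZMod n)) L2 β := by
  induction L2 with
  | zero => simp [cnt]
  | succ L2 ih =>
      have e : a + ((L1 + L2 : ℕ) : ZMod n) = a + (L1 : ZMod n) + ((L2 : ℕ) : ZMod n) := by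
        push_cast; ring
      have h1 : L1 + (L2 + 1) = (L1 + L2) + 1 := rfl
      rw [h1, cnt_succ_end, ih, cnt_succ_end, e, add_assoc]

lemma cnt_compl (n : ℕ) (σ : ZMod n → Bool) (a : ZMod n) (L : ℕ) (β : Bool) :
    cnt n σ a L β + cnt n σ a L (!β) = L := by
  classical
  have h := Finset.card_filter_add_card_filter_not
    (s := Finset.range L) (p := fun t : ℕ => σ (a + (t : ZMod n)) = β)
  rw [Finset.card_range] at h
  unfold cnt
  have he : Finset.filter (fun t : ℕ => σ (a + (t : ZMod n)) = !β) (Finset.range L)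
      = Finset.filter (fun t : ℕ => ¬ (σ (a + (t : ZMod n)) = β)) (Finset.range L) := by
    apply Finset.filter_congr
    intro t _
    cases hb : σ (a + (t : ZMod n)) <;> cases β <;> simp
  rw [he, h]

lemma maj_iff (n r : ℕ) (σ : ZMod n → Bool) (c : ZMod n) (β : Bool) :
    maj n r σ c = β ↔ r + 1 ≤ cnt n σ (c - (r : ZMod n)) (2 * r + 1) β := by
  have ht : majCount n r σ c = cnt n σ (c - (r : ZMod n)) (2 * r + 1) true := rfl
  have hc := cnt_compl n σ (c - (r : ZMod n)) (2 * r + 1) true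
  rw [Bool.not_true] at hc
  cases β
  · simp only [maj, decide_eq_false_iff_not, not_le]
    omega
  · simp only [maj, decide_eq_true_eq]
    omega

lemma boundary_left (n r : ℕ) (σ : ZMod n → Bool) (c : ZMod n) (β : Bool)
    (h1 : maj n r σ c = β) (h2 : maj n r σ (c - 1) = !β) :
    cnt n σ (c - (r : ZMod n)) (2 * r + 1) β = r + 1 := by
  have ha := (maj_iff n r σ c β).mp h1
  have hb : ¬ (r + 1 ≤ cnt n σ (c - 1 - (r : ZMod n)) (2 * r + 1) β) := by
    intro hcon
    have := (maj_iff n r σ (c - 1) β).mpr hcon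
    rw [h2] at this
    cases β <;> simp at this
  have e1 := cnt_succ_end n σ (c - 1 - (r : ZMod n)) (2 * r + 1) β
  have e2 := cnt_succ_front n σ (c - 1 - (r : ZMod n)) (2 * r + 1) β
  have e3 : c - 1 - (r : ZMod n) + 1 = c - (r : ZMod n) := by ring
  rw [e3] at e2
  split_ifs at e1 e2 <;> omega

lemma boundary_right (n r : ℕ) (σ : ZMod n → Bool) (c : ZMod n) (β : Bool)
    (h1 : maj n r σ c = β) (h2 : maj n r σ (c + 1) = !β) :
    cnt n σ (c - (r : ZMod n)) (2 * r + 1) β = r + 1 := by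
  have ha := (maj_iff n r σ c β).mp h1
  have hb : ¬ (r + 1 ≤ cnt n σ (c + 1 - (r : ZMod n)) (2 * r + 1) β) := by
    intro hcon
    have := (maj_iff n r σ (c + 1) β).mpr hcon
    rw [h2] at this
    cases β <;> simp at this
  have e1 := cnt_succ_end n σ (c - (r : ZMod n)) (2 * r + 1) β
  have e2 := cnt_succ_front n σ (c - (r : ZMod n)) (2 * r + 1) β
  have e3 : c - (r : ZMod n) + 1 = c + 1 - (r : ZMod n) := by ring
  rw [e3] at e2
  split_ifs at e1 e2 <;> omega

/-- Block-length formula: for a maximal homogeneous block `[i, j] = [a, a+L-1]` of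
`σ' = maj_r σ` with value `β` and length `L ≤ 2r+1`,
`L = #_β(σ[i-r, j+r]) - #_{¬β}(σ[j-r, i+r])`. -/
theorem block_length_formula (n r : ℕ) (hr : 1 ≤ r) (hn : 4 * r + 2 < n)
    (σ σ' : ZMod n → Bool) (h : maj n r σ = σ')
    (a : ZMod n) (L : ℕ) (β : Bool) (hβ : σ' a = β)
    (hblk : IsBlock n σ' a L) (hL : L ≤ 2 * r + 1) :
    (L : ℤ) = (cnt n σ (a - (r : ZMod n)) (L + 2 * r) β : ℤ) -
      (cnt n σ (a + (L : ZMod n) - 1 - (r : ZMod n)) (2 * r + 2 - L) (!β) : ℤ) := by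
  subst h
  obtain ⟨hL0, hLn, hhom, hleft, hright⟩ := hblk
  have hcastL : ((L - 1 : ℕ) : ZMod n) = (L : ZMod n) - 1 := by
    rw [Nat.cast_sub hL0, Nat.cast_one]
  have h2 : maj n r σ (a - 1) = !β := by
    rw [hβ] at hleft
    cases hx : maj n r σ (a - 1) <;> cases β <;> simp_all
  have hb1 : maj n r σ (a + (L : ZMod n) - 1) = β := by
    have ht := hhom (L - 1) (by omega)
    rw [hcastL, show a + ((L : ZMod n) - 1) = a + (L : ZMod n) - 1 from by ring] at ht
    rw [ht, hβ]
  have hb2 : maj n r σ (a + (L : ZMod n) - 1 + 1) = !β := by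
    rw [show a + (L : ZMod n) - 1 + 1 = a + (L : ZMod n) from by ring]
    rw [hβ] at hright
    cases hx : maj n r σ (a + (L : ZMod n)) <;> cases β <;> simp_all
  have F1 := boundary_left n r σ a β hβ h2
  have F2 := boundary_right n r σ (a + (L : ZMod n) - 1) β hb1 hb2
  have hstart1 : a + (L : ZMod n) - 1 - (r : ZMod n)
      = a - (r : ZMod n) + ((L - 1 : ℕ) : ZMod n) := by
    rw [hcastL]; ring
  rw [hstart1] at F2 ⊢
  have hl1 : 2 * r + 1 = (L - 1) + (2 * r + 2 - L) := by omega
  have hl2 : 2 * r + 1 = (2 * r + 2 - L) + (L - 1) := by omega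
  have hl3 : L + 2 * r = (L - 1) + ((2 * r + 2 - L) + (L - 1)) := by omega
  rw [hl1, cnt_add] at F1
  rw [hl2, cnt_add] at F2
  rw [hl3, cnt_add, cnt_add]
  have hcompl := cnt_compl n σ (a - (r : ZMod n) + ((L - 1 : ℕ) : ZMod n)) (2 * r + 2 - L) β
  omega
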